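/- arXiv:1008.0263 — 6 statements merged into one kernel-verified Lean document; each statement's English description precedes it below -/
import Mathlib

section
/- Let \Phi be a finite multiset of nonzero vectors spanning an r-dimensional rational vector space V, and let R be the ring of rational functions on the dual space generated by polynomials and the inverses 1/\phi for \phi \in \Phi. Then every function of the form \theta(L)(x) = 1/\prod_{\alpha \in L} \langle \alpha, x \rangle, where L is a finite multiset of elements of \Phi spanning V, is a linear combination of functions of the form 1/(\alpha_{i_1}^{n_1} \cdots \alpha_{i_r}^{n_r}) where \{\alpha_{i_1}, \ldots, \alpha_{i_r}\} is a linearly independent subset of \Phi of size r and n_1, \ldots, n_r are positive integers. -/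
/-!
If the support of `L` is linearly independent, it is a basis of `V` and `θ(L)` is already one of
the basic fractions. Otherwise a relation `∑ g a • a = 0` on the support gives, for any `a₀` with
`g a₀ ≠ 0`, the identity `1/∏ L = ∑_{a ≠ a₀} (-g a / g a₀) / (a₀ ∏ (L - a))` (divide
`∑ g a ⟨a, x⟩ = 0` by `⟨a₀, x⟩ ∏ L`). Every multiset on the right still spans `V`, since `a` lies
in the span of the rest of the support. Numbering the elements of `Φ` and taking `a₀` of least
number, each of them has smaller total weight than `L`, so induction on that weight concludes.
-/

open Module Submodule

theorem Multiset.sum_map_cons_erase_lt {α : Type*} [DecidableEq α] {w : α → ℕ} {L : Multiset α}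
    {a b : α} (ha : a ∈ L) (hw : w b < w a) :
    ((b ::ₘ L.erase a).map w).sum < (L.map w).sum := by
  rw [← Multiset.sum_map_erase ha, Multiset.map_cons, Multiset.sum_cons]
  omega

theorem Multiset.inv_prod_map_eq_sum_of_sum_mul_eq_zero {α K : Type*} [DecidableEq α] [Field K]
    {f : α → K} {L : Multiset α} (hf : ∀ a ∈ L, f a ≠ 0) {g : α → K}
    (hg : ∑ a ∈ L.toFinset, g a * f a = 0) {a₀ : α} (ha₀ : a₀ ∈ L) (hg₀ : g a₀ ≠ 0) :
    (L.map f).prod⁻¹ =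
      ∑ a ∈ L.toFinset.erase a₀, -g a / g a₀ * ((a₀ ::ₘ L.erase a).map f).prod⁻¹ := by
  set P := (L.map f).prod
  have hterm : ∀ a ∈ L.toFinset.erase a₀,
      -g a / g a₀ * ((a₀ ::ₘ L.erase a).map f).prod⁻¹ = -(g a * f a) / (g a₀ * f a₀ * P) := by
    intro a ha
    have ha : a ∈ L := Multiset.mem_toFinset.mp (Finset.mem_of_mem_erase ha)
    have hPa : P = f a * ((L.erase a).map f).prod := (Multiset.prod_map_erase ha).symm
    rw [Multiset.map_cons, Multiset.prod_cons, hPa]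
    field_simp [hf a ha, hf a₀ ha₀]
  have hrest : ∑ a ∈ L.toFinset.erase a₀, g a * f a = -(g a₀ * f a₀) := by
    rw [← Finset.add_sum_erase _ _ (Multiset.mem_toFinset.mpr ha₀)] at hg
    linear_combination hg
  rw [Finset.sum_congr rfl hterm, ← Finset.sum_div, Finset.sum_neg_distrib, hrest, neg_neg,
    div_mul_cancel_left₀ (mul_ne_zero hg₀ (hf a₀ ha₀))]

theorem Submodule.mem_span_erase_of_sum_smul_eq_zero {K M : Type*} [DivisionRing K]
    [AddCommGroup M] [Module K M] [DecidableEq M] {s : Finset M} {g : M → K}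
    (hg : ∑ b ∈ s, g b • b = 0) {a : M} (ha : a ∈ s) (hga : g a ≠ 0) : a ∈ span K (s.erase a : Set M) := by
  rw [← Finset.add_sum_erase _ _ ha] at hg
  have hsum : ∑ b ∈ s.erase a, g b • b ∈ span K (s.erase a : Set M) :=
    sum_mem fun b hb => smul_mem _ _ (subset_span hb)
  have := smul_mem _ (g a)⁻¹ (neg_mem hsum)
  rwa [← eq_neg_of_add_eq_zero_left hg, inv_smul_smul₀ hga] at this

theorem Submodule.span_le_span_cons_erase {K M : Type*} [DivisionRing K] [AddCommGroup M]
    [Module K M] [DecidableEq M] {L : Multiset M} {a : M} (b : M)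
    (ha : a ∈ span K (L.toFinset.erase a : Set M)) :
    span K {v | v ∈ L} ≤ span K {v | v ∈ b ::ₘ L.erase a} := by
  have hsub : ∀ {v}, v ≠ a → v ∈ L → v ∈ b ::ₘ L.erase a := fun hva hv =>
    Multiset.mem_cons_of_mem ((Multiset.mem_erase_of_ne hva).mpr hv)
  refine span_le.mpr fun v hv => ?_
  by_cases hva : v = a
  · subst hva
    refine span_mono (fun u hu => ?_) ha
    obtain ⟨hua, hu⟩ := Finset.mem_erase.mp hu
    exact hsub hua (Multiset.mem_toFinset.mp hu)
  · exact subset_span (hsub hva hv)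

theorem Multiset.exists_prod_map_eq_prod_pow {K V : Type*} [DivisionRing K] [AddCommGroup V]
    [Module K V] {r : ℕ} (hdim : finrank K V = r) {L : Multiset V}
    (hli : LinearIndepOn K id {v | v ∈ L}) (hL : span K {v | v ∈ L} = ⊤)
    (M : Type*) [CommMonoid M] :
    ∃ (σ : Fin r → V) (n : Fin r → ℕ), (∀ j, σ j ∈ L) ∧ LinearIndependent K σ ∧
      (∀ j, 1 ≤ n j) ∧ ∀ f : V → M, (L.map f).prod = ∏ j, f (σ j) ^ n j := by
  classical
  have hset : {v | v ∈ L} = (L.toFinset : Set V) := by ext; simp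
  rw [hset] at hli hL
  have hcard : L.toFinset.card = r := by
    rw [← finrank_span_finset_eq_card hli, hL, finrank_top, hdim]
  let e := (L.toFinset.equivFinOfCardEq hcard).symm
  have hmem : ∀ j, (e j : V) ∈ L := fun j => Multiset.mem_toFinset.mp (e j).2
  refine ⟨fun j => e j, fun j => L.count (e j : V), hmem, hli.comp e e.injective,
    fun j => Multiset.count_pos.mpr (hmem j), fun f => ?_⟩
  rw [Finset.prod_multiset_map_count, ← Finset.prod_coe_sort, ← e.prod_comp]

theorem Submodule.exists_finset_sum_of_mem_span_image {R M ι : Type*} [Semiring R]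
    [AddCommMonoid M] [Module R M] [Nonempty ι] {v : ι → M} {S : Set ι} {m : M}
    (hm : m ∈ span R (v '' S)) :
    ∃ (s : Finset ℕ) (c : ℕ → R) (a : ℕ → ι),
      (∀ i ∈ s, a i ∈ S) ∧ ∑ i ∈ s, c i • v (a i) = m := by
  classical
  obtain ⟨k, c, g, rfl⟩ := mem_span_set'.mp hm
  choose a haS hav using fun i => (g i).2
  refine ⟨Finset.range k, fun i => if h : i < k then c ⟨i, h⟩ else 0,
    fun i => if h : i < k then a ⟨i, h⟩ else Classical.arbitrary ι,
    fun i hi => by simpa [Finset.mem_range.mp hi] using haS ⟨i, Finset.mem_range.mp hi⟩, ?_⟩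
  rw [← Fin.sum_univ_eq_sum_range]
  simp [hav]

section Theta

variable {V : Type*} [AddCommGroup V] [Module ℝ V]

def regularPoints (Φ : Multiset V) : Set (Dual ℝ V) := {x | ∀ φ ∈ Φ, x φ ≠ 0}

/-- `θ(L)` as a function on the complement of the hyperplanes `ker φ`, `φ ∈ Φ`, where all the
denominators are nonzero. -/
noncomputable def theta (Φ L : Multiset V) (x : regularPoints Φ) : ℝ :=
  ((L.map fun α => (x : Dual ℝ V) α).prod)⁻¹

/-- The generator `θ(M)` is the fraction `1/(α_{i₁}^{n₁} ⋯ α_{i_r}^{n_r})` whose basis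
`{α_{i_j}}` is the support of `M` and whose exponents are the multiplicities. -/
def basisFractionSpan (Φ : Multiset V) : Submodule ℝ (regularPoints Φ → ℝ) :=
  span ℝ (theta Φ '' {M | (∀ α ∈ M, α ∈ Φ) ∧ LinearIndepOn ℝ id {v | v ∈ M} ∧
    span ℝ {v | v ∈ M} = ⊤})

theorem theta_mem_basisFractionSpan_of_injOn {Φ : Multiset V} {w : V → ℕ}
    (hw : Set.InjOn w {v | v ∈ Φ}) (L : Multiset V) (hLΦ : ∀ α ∈ L, α ∈ Φ)
    (hL : span ℝ {v | v ∈ L} = ⊤) : theta Φ L ∈ basisFractionSpan Φ := by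
  classical
  induction hN : (L.map w).sum using Nat.strong_induction_on generalizing L with
  | _ N ih =>
  by_cases hli : LinearIndepOn ℝ id {v | v ∈ L}
  · exact subset_span ⟨L, ⟨hLΦ, hli, hL⟩, rfl⟩
  have hset : {v | v ∈ L} = (L.toFinset : Set V) := by ext; simp
  rw [hset, not_linearIndepOn_finset_iff] at hli
  obtain ⟨g, hg, a₁, ha₁, hga₁⟩ := hli
  obtain ⟨a₀, ha₀, hmin⟩ :=
    (L.toFinset.filter (g · ≠ 0)).exists_min_image w ⟨a₁, by simp [ha₁, hga₁]⟩
  rw [Finset.mem_filter] at ha₀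
  have hrel : theta Φ L =
      ∑ a ∈ L.toFinset.erase a₀, (-g a / g a₀) • theta Φ (a₀ ::ₘ L.erase a) := by
    funext x
    simp only [Finset.sum_apply, Pi.smul_apply, smul_eq_mul, theta]
    refine Multiset.inv_prod_map_eq_sum_of_sum_mul_eq_zero (fun a ha => x.2 a (hLΦ a ha)) ?_
      (Multiset.mem_toFinset.mp ha₀.1) ha₀.2
    simpa using congrArg x.1 hg
  rw [hrel]
  refine sum_mem fun a ha => ?_
  obtain ⟨ha_ne, ha⟩ := Finset.mem_erase.mp ha
  by_cases hga : g a = 0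
  · simp [hga]
  have haL : a ∈ L := Multiset.mem_toFinset.mp ha
  have hlt : w a₀ < w a := lt_of_le_of_ne (hmin a (by simp [ha, hga])) fun h =>
    ha_ne (hw (hLΦ _ (Multiset.mem_toFinset.mp ha₀.1)) (hLΦ _ haL) h).symm
  refine smul_mem _ _ (ih _ (hN ▸ Multiset.sum_map_cons_erase_lt haL hlt) _ ?_ ?_ rfl)
  · intro α hα
    rcases Multiset.mem_cons.mp hα with rfl | hα
    · exact hLΦ _ (Multiset.mem_toFinset.mp ha₀.1)
    · exact hLΦ _ (Multiset.mem_of_mem_erase hα)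
  · exact eq_top_iff.mpr (hL ▸ span_le_span_cons_erase a₀
      (mem_span_erase_of_sum_smul_eq_zero hg ha hga))

theorem theta_mem_basisFractionSpan {Φ L : Multiset V} (hLΦ : ∀ α ∈ L, α ∈ Φ)
    (hL : span ℝ {v | v ∈ L} = ⊤) : theta Φ L ∈ basisFractionSpan Φ := by
  obtain ⟨w, hw⟩ := Set.countable_iff_exists_injOn.mp (Multiset.finite_toSet Φ).countable
  exact theta_mem_basisFractionSpan_of_injOn hw L hLΦ hL

end Theta

theorem theta_L_decomposition_general
    (r : ℕ) (V : Type*) [AddCommGroup V] [Module ℝ V]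
    (hdim : Module.finrank ℝ V = r)
    (Φ : Multiset V)
    (L : Multiset V) (hLΦ : ∀ α ∈ L, α ∈ Φ)
    (hLspan : Submodule.span ℝ {v : V | v ∈ L} = ⊤) :
    ∃ (s : Finset ℕ) (c : ℕ → ℝ) (σ : ℕ → Fin r → V) (n : ℕ → Fin r → ℕ),
      (∀ i ∈ s, (∀ j : Fin r, σ i j ∈ Φ) ∧ LinearIndependent ℝ (σ i) ∧
        ∀ j : Fin r, 1 ≤ n i j) ∧
      ∀ x : Module.Dual ℝ V, (∀ φ ∈ Φ, x φ ≠ 0) →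
        ((L.map (fun α => x α)).prod)⁻¹
          = ∑ i ∈ s, c i * (∏ j : Fin r, x (σ i j) ^ n i j)⁻¹ := by
  obtain ⟨s, c, M, hM, hsum⟩ :=
    exists_finset_sum_of_mem_span_image (theta_mem_basisFractionSpan hLΦ hLspan)
  choose! σ n hσ hσli hn hprod using fun i (hi : i ∈ s) =>
    Multiset.exists_prod_map_eq_prod_pow hdim (hM i hi).2.1 (hM i hi).2.2 ℝ
  refine ⟨s, c, σ, n, fun i hi => ⟨fun j => (hM i hi).1 _ (hσ i hi j), hσli i hi, hn i hi⟩,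
    fun x hx => ?_⟩
  have hx := congrFun hsum ⟨x, hx⟩
  simp only [Finset.sum_apply, Pi.smul_apply, smul_eq_mul, theta] at hx
  rw [← hx]
  exact Finset.sum_congr rfl fun i hi => by rw [hprod i hi]

/-- Let `Φ` be a finite multiset of nonzero vectors spanning an
`r`-dimensional vector space `V`. Every function `θ(L)(x) = 1/∏_{α∈L} ⟨α,x⟩`, where `L`
is a finite multiset of elements of `Φ` spanning `V`, is (on the set of regular points)
a linear combination of functions `1/(α_{i₁}^{n₁} ⋯ α_{i_r}^{n_r})` with
`{α_{i₁},…,α_{i_r}}` a linearly independent subset of `Φ` of size `r` and the `n_j`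
positive integers. -/
theorem theta_L_decomposition
    (r : ℕ) (V : Type*) [AddCommGroup V] [Module ℝ V] [FiniteDimensional ℝ V]
    (hdim : Module.finrank ℝ V = r)
    (Φ : Multiset V) (hΦ0 : ∀ v ∈ Φ, v ≠ (0 : V))
    (hΦspan : Submodule.span ℝ {v : V | v ∈ Φ} = ⊤)
    (L : Multiset V) (hLΦ : ∀ α ∈ L, α ∈ Φ)
    (hLspan : Submodule.span ℝ {v : V | v ∈ L} = ⊤) :
    ∃ (s : Finset ℕ) (c : ℕ → ℝ) (σ : ℕ → Fin r → V) (n : ℕ → Fin r → ℕ),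
      (∀ i ∈ s, (∀ j : Fin r, σ i j ∈ Φ) ∧ LinearIndependent ℝ (σ i) ∧
        ∀ j : Fin r, 1 ≤ n i j) ∧
      ∀ x : Module.Dual ℝ V, (∀ φ ∈ Φ, x φ ≠ 0) →
        ((L.map (fun α => x α)).prod)⁻¹
          = ∑ i ∈ s, c i * (∏ j : Fin r, x (σ i j) ^ n i j)⁻¹ :=
  theta_L_decomposition_general r V hdim Φ L hLΦ hLspan
end

section
/- Let \Lambda = \mathbb{Z}, let z be a complex number with z \notin \mathbb{Z}, and let t be real. Then \sum_{n \in \mathbb{Z}} e^{2\pi i n t}/(2\pi i (n + z)) (taken as the symmetric limit over |n| \le N) equals e^{(\lfloor t \rfloor - t) 2\pi i z}/(1 - e^{-2\pi i z}) for all t \notin \mathbb{Z}. -/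
open Complex Filter Finset

open Real Topology MeasureTheory

/-!
The function `g x = e^{-2πizx} / (1 - e^{-2πiz})` has Fourier coefficients `1 / (2πi(n + z))` on
`[0, 1]`, so the sum is the symmetric Fourier partial sum of `g` at `fract t`, and
`g (fract t)` is the claimed limit. Partial sums of a continuous function converge at every
interior point `t` where it is differentiable: multiplying the Dirichlet kernel by
`e^{2πiu} - 1` turns `S_N g t - g t` into a difference of two Fourier integrals, at frequencies
`N + 1` and `-N`, of the continuous function `(g x - g t) / (e^{2πi(t-x)} - 1)`, and these tend
to `0` by the Riemann–Lebesgue lemma.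
-/

theorem sub_one_mul_sum_zpow_Icc_neg {K : Type*} [Field K] {q : K} (hq : q ≠ 0) (N : ℕ) :
    (q - 1) * ∑ n ∈ Icc (-(N : ℤ)) N, q ^ n = q ^ ((N : ℤ) + 1) - q ^ (-(N : ℤ)) := by
  induction N with
  | zero => simp
  | succ N ih =>
    have hIcc : Icc (-((N + 1 : ℕ) : ℤ)) ((N + 1 : ℕ) : ℤ)
        = insert (-(N : ℤ) - 1) (insert ((N : ℤ) + 1) (Icc (-(N : ℤ)) N)) := by
      ext n; simp only [mem_Icc, mem_insert]; omega
    rw [hIcc, sum_insert (by simp only [mem_Icc, mem_insert]; omega),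
      sum_insert (by simp only [mem_Icc]; omega), mul_add, mul_add, ih]
    simp only [zpow_add₀ hq, zpow_sub₀ hq, zpow_neg, zpow_one, Nat.cast_succ, neg_add]
    field_simp
    ring

noncomputable def dirichletKernel (N : ℕ) (u : ℝ) : ℂ :=
  ∑ n ∈ Icc (-(N : ℤ)) N, cexp (2 * π * I * n * u)

theorem exp_sub_one_mul_dirichletKernel (N : ℕ) (u : ℝ) :
    (cexp (2 * π * I * u) - 1) * dirichletKernel N u =
      cexp (2 * π * I * (N + 1) * u) - cexp (2 * π * I * (-N) * u) := by
  have hpow (m : ℤ) : cexp (2 * π * I * m * u) = cexp (2 * π * I * u) ^ m := by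
    rw [← Complex.exp_int_mul]; ring_nf
  have hN1 : cexp (2 * π * I * (N + 1) * u) = cexp (2 * π * I * u) ^ ((N : ℤ) + 1) := by
    rw [← hpow]; push_cast; ring_nf
  have hN : cexp (2 * π * I * (-N) * u) = cexp (2 * π * I * u) ^ (-(N : ℤ)) := by
    rw [← hpow]; push_cast; ring_nf
  simp only [dirichletKernel, hpow, hN1, hN]
  exact sub_one_mul_sum_zpow_Icc_neg (Complex.exp_ne_zero _) N

theorem integral_exp_two_pi_I_int_mul_sub (n : ℤ) (t : ℝ) :
    ∫ x in (0 : ℝ)..1, cexp (2 * π * I * n * ↑(t - x)) = if n = 0 then 1 else 0 := by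
  split_ifs with hn
  · simp [hn]
  have hc : -(2 * π * I * n) ≠ 0 := by simp [Real.pi_ne_zero, hn, I_ne_zero]
  have hsplit (x : ℝ) : cexp (2 * π * I * n * ↑(t - x)) =
      cexp (2 * π * I * n * t) * cexp (-(2 * π * I * n) * x) := by
    rw [← Complex.exp_add]; push_cast; ring_nf
  have hperiod : cexp (-(2 * π * I * n)) = 1 := by
    rw [show -(2 * π * I * n) = (-n : ℤ) * (2 * π * I) by push_cast; ring]
    exact Complex.exp_int_mul_two_pi_mul_I _
  simp only [hsplit, intervalIntegral.integral_const_mul, integral_exp_mul_complex hc,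
    ofReal_one, ofReal_zero, mul_one, mul_zero, hperiod, Complex.exp_zero, sub_self, zero_div]

theorem integral_dirichletKernel_sub (N : ℕ) (t : ℝ) :
    ∫ x in (0 : ℝ)..1, dirichletKernel N (t - x) = 1 := by
  simp only [dirichletKernel]
  rw [intervalIntegral.integral_finsetSum fun n _ =>
    (by fun_prop : Continuous _).intervalIntegrable _ _]
  simp only [integral_exp_two_pi_I_int_mul_sub, sum_ite_eq', mem_Icc]
  simp

theorem fourierCoeffOn_zero_one (f : ℝ → ℂ) (n : ℤ) :
    fourierCoeffOn zero_lt_one f n = ∫ x in (0 : ℝ)..1, cexp (-(2 * π * I * n * x)) * f x := by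
  simp only [fourierCoeffOn_eq_integral, fourier_coe_apply]
  simp

theorem sum_fourierCoeffOn_mul_exp_eq_integral {f : ℝ → ℂ}
    (hf : IntervalIntegrable f volume 0 1) (N : ℕ) (t : ℝ) :
    ∑ n ∈ Icc (-(N : ℤ)) N, fourierCoeffOn zero_lt_one f n * cexp (2 * π * I * n * t) =
      ∫ x in (0 : ℝ)..1, f x * dirichletKernel N (t - x) := by
  simp only [dirichletKernel, mul_sum]
  rw [intervalIntegral.integral_finsetSum fun n _ =>
    hf.mul_continuousOn (by fun_prop : Continuous _).continuousOn]
  refine sum_congr rfl fun n _ => ?_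
  rw [fourierCoeffOn_zero_one, ← intervalIntegral.integral_mul_const]
  refine intervalIntegral.integral_congr fun x _ => ?_
  rw [mul_comm (cexp _), mul_assoc, ← Complex.exp_add]
  push_cast; ring_nf

theorem sum_fourierCoeffOn_mul_exp_sub_eq_integral {f : ℝ → ℂ}
    (hf : IntervalIntegrable f volume 0 1) (N : ℕ) (t : ℝ) :
    ∑ n ∈ Icc (-(N : ℤ)) N, fourierCoeffOn zero_lt_one f n * cexp (2 * π * I * n * t) - f t =
      ∫ x in (0 : ℝ)..1, (f x - f t) * dirichletKernel N (t - x) := by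
  have hD : Continuous fun x => dirichletKernel N (t - x) := by
    unfold dirichletKernel; fun_prop
  conv_lhs => rw [sum_fourierCoeffOn_mul_exp_eq_integral hf, ← mul_one (f t),
    ← integral_dirichletKernel_sub N t, ← intervalIntegral.integral_const_mul,
    ← intervalIntegral.integral_sub (hf.mul_continuousOn hD.continuousOn)
      (hD.intervalIntegrable _ _ |>.const_mul _)]
  simp only [sub_mul]

theorem exp_two_pi_I_mul_ne_one {u : ℝ} (h0 : u ≠ 0) (h1 : |u| < 1) :
    cexp (2 * π * I * u) ≠ 1 := by
  rw [Ne, Complex.exp_eq_one_iff]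
  rintro ⟨m, hm⟩
  have hu : u = m := by
    have : (u : ℂ) = m := mul_left_cancel₀ two_pi_I_ne_zero (by rw [hm]; ring)
    exact_mod_cast this
  subst hu
  have : |m| < 1 := by exact_mod_cast h1
  exact h0 (by simp [Int.abs_lt_one_iff.mp this])

theorem abs_sub_lt_one_of_mem_Ioo_of_mem_Icc {t x : ℝ} (ht : t ∈ Set.Ioo 0 1)
    (hx : x ∈ Set.Icc 0 1) : |t - x| < 1 :=
  abs_sub_lt_iff.mpr ⟨by linarith [hx.1, ht.2], by linarith [hx.2, ht.1]⟩

noncomputable def dirichletQuotient (f : ℝ → ℂ) (t : ℝ) : ℝ → ℂ :=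
  Function.update (fun x => (f x - f t) / (cexp (2 * π * I * ↑(t - x)) - 1)) t
    (-deriv f t / (2 * π * I))

theorem tendsto_sub_div_exp_sub_one {f : ℝ → ℂ} {t : ℝ} (hd : DifferentiableAt ℝ f t) :
    Tendsto (fun x => (f x - f t) / (cexp (2 * π * I * ↑(t - x)) - 1)) (𝓝[≠] t)
      (𝓝 (-deriv f t / (2 * π * I))) := by
  have hφ : HasDerivAt (fun x : ℝ => cexp (2 * π * I * ↑(t - x)) - 1) (-(2 * π * I)) t := by
    simpa using
      ((((hasDerivAt_id t).const_sub t).ofReal_comp.const_mul (2 * π * I)).cexp).sub_const 1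
  have h := (hasDerivAt_iff_tendsto_slope.mp hd.hasDerivAt).div
    (hasDerivAt_iff_tendsto_slope.mp hφ) (neg_ne_zero.mpr two_pi_I_ne_zero)
  rw [div_neg, ← neg_div] at h
  refine h.congr' (eventually_nhdsWithin_of_forall fun x (hx : x ≠ t) => ?_)
  have hxt : ((x - t : ℝ) : ℂ)⁻¹ ≠ 0 := by exact_mod_cast inv_ne_zero (sub_ne_zero.mpr hx)
  simp only [Pi.div_apply, slope_def_module, sub_self, ofReal_zero, mul_zero, Complex.exp_zero,
    sub_zero, real_smul, ofReal_inv]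
  exact mul_div_mul_left _ _ hxt

theorem continuousOn_dirichletQuotient {f : ℝ → ℂ} {t : ℝ}
    (hf : ContinuousOn f (Set.Icc 0 1)) (ht : t ∈ Set.Ioo 0 1) (hd : DifferentiableAt ℝ f t) :
    ContinuousOn (dirichletQuotient f t) (Set.Icc 0 1) := by
  rw [dirichletQuotient, continuousOn_update_iff]
  refine ⟨?_, fun _ => (tendsto_sub_div_exp_sub_one hd).mono_left
    (nhdsWithin_mono t fun x hx => hx.2)⟩
  refine ((hf.mono Set.sdiff_subset).sub continuousOn_const).div (by fun_prop) fun x hx =>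
    sub_ne_zero.mpr (exp_two_pi_I_mul_ne_one (sub_ne_zero.mpr (Ne.symm hx.2))
      (abs_sub_lt_one_of_mem_Ioo_of_mem_Icc ht hx.1))

theorem sub_eq_dirichletQuotient_mul (f : ℝ → ℂ) {t x : ℝ} (h : |t - x| < 1) :
    f x - f t = dirichletQuotient f t x * (cexp (2 * π * I * ↑(t - x)) - 1) := by
  rcases eq_or_ne x t with rfl | hx
  · simp
  · rw [dirichletQuotient, Function.update_of_ne hx, div_mul_cancel₀ _ (sub_ne_zero.mpr
      (exp_two_pi_I_mul_ne_one (sub_ne_zero.mpr hx.symm) h))]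

theorem tendsto_intervalIntegral_exp_mul_cocompact (g : ℝ → ℂ) (a b t : ℝ) :
    Tendsto (fun w : ℝ => ∫ x in a..b, cexp (2 * π * I * w * ↑(t - x)) * g x) (cocompact ℝ)
      (𝓝 0) := by
  refine squeeze_zero_norm (fun w => le_of_eq ?_) (tendsto_zero_iff_norm_tendsto_zero.mp
    (Real.tendsto_integral_exp_smul_cocompact ((Set.uIoc a b).indicator g)))
  have hsplit (x : ℝ) : cexp (2 * π * I * w * ↑(t - x)) * g x =
      cexp (↑(2 * π * w * t) * I) * (Real.fourierChar (-(x * w)) • g x) := by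
    rw [Circle.smul_def, Real.fourierChar_apply, smul_eq_mul, ← mul_assoc, ← Complex.exp_add]
    push_cast; ring_nf
  simp only [intervalIntegral.norm_integral_eq_norm_integral_uIoc, hsplit,
    integral_const_mul, norm_mul, norm_exp_ofReal_mul_I, one_mul]
  rw [← integral_indicator measurableSet_uIoc]
  simp only [Set.indicator_smul_apply]

theorem tendsto_sum_fourierCoeffOn_mul_exp_of_differentiableAt {f : ℝ → ℂ} {t : ℝ}
    (hf : ContinuousOn f (Set.Icc 0 1)) (ht : t ∈ Set.Ioo 0 1) (hd : DifferentiableAt ℝ f t) :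
    Tendsto (fun N : ℕ => ∑ n ∈ Icc (-(N : ℤ)) N,
      fourierCoeffOn zero_lt_one f n * cexp (2 * π * I * n * t)) atTop (𝓝 (f t)) := by
  set H := dirichletQuotient f t
  have hH : IntervalIntegrable H volume 0 1 :=
    (continuousOn_dirichletQuotient hf ht hd).intervalIntegrable_of_Icc zero_le_one
  have hkernel (N : ℕ) : ∑ n ∈ Icc (-(N : ℤ)) N,
      fourierCoeffOn zero_lt_one f n * cexp (2 * π * I * n * t) - f t =
        (∫ x in (0 : ℝ)..1, cexp (2 * π * I * ↑((N : ℝ) + 1) * ↑(t - x)) * H x) -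
          ∫ x in (0 : ℝ)..1, cexp (2 * π * I * ↑(-(N : ℝ)) * ↑(t - x)) * H x := by
    rw [sum_fourierCoeffOn_mul_exp_sub_eq_integral (hf.intervalIntegrable_of_Icc zero_le_one),
      ← intervalIntegral.integral_sub (hH.continuousOn_mul (by fun_prop))
        (hH.continuousOn_mul (by fun_prop))]
    refine intervalIntegral.integral_congr fun x hx => ?_
    rw [Set.uIcc_of_le zero_le_one] at hx
    rw [sub_eq_dirichletQuotient_mul f (abs_sub_lt_one_of_mem_Ioo_of_mem_Icc ht hx), mul_assoc,
      exp_sub_one_mul_dirichletKernel]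
    push_cast; ring
  have hN1 : Tendsto (fun N : ℕ => (N : ℝ) + 1) atTop (cocompact ℝ) := by
    rw [cocompact_eq_atBot_atTop]
    exact (tendsto_atTop_add_const_right _ 1 tendsto_natCast_atTop_atTop).mono_right le_sup_right
  have hN2 : Tendsto (fun N : ℕ => -(N : ℝ)) atTop (cocompact ℝ) := by
    rw [cocompact_eq_atBot_atTop]
    exact (tendsto_neg_atBot_iff.mpr tendsto_natCast_atTop_atTop).mono_right le_sup_left
  have hRL := tendsto_intervalIntegral_exp_mul_cocompact H 0 1 t
  have h := (hRL.comp hN1).sub (hRL.comp hN2)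
  rw [sub_zero] at h
  exact tendsto_sub_nhds_zero_iff.mp (h.congr fun N => (hkernel N).symm)

theorem exp_two_pi_I_int_mul_fract (n : ℤ) (t : ℝ) :
    cexp (2 * π * I * n * ↑(Int.fract t)) = cexp (2 * π * I * n * t) := by
  rw [Int.fract, ofReal_sub, mul_sub, Complex.exp_sub, ofReal_intCast,
    show 2 * π * I * n * (⌊t⌋ : ℂ) = (n * ⌊t⌋ : ℤ) * (2 * π * I) by push_cast; ring,
    Complex.exp_int_mul_two_pi_mul_I, div_one]

theorem fourierCoeffOn_exp_neg_two_pi_I_mul {z : ℂ} {n : ℤ} (h : (n : ℂ) + z ≠ 0) :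
    fourierCoeffOn zero_lt_one (fun x : ℝ => cexp (-(2 * π * I) * z * x)) n =
      (1 - cexp (-(2 * π * I) * z)) / (2 * π * I * (n + z)) := by
  have hc : -(2 * π * I * (n + z)) ≠ 0 := neg_ne_zero.mpr (mul_ne_zero two_pi_I_ne_zero h)
  have hperiod : cexp (-(2 * π * I * (n + z))) = cexp (-(2 * π * I) * z) := by
    rw [show -(2 * π * I * (n + z)) = -(2 * π * I) * z + (-n : ℤ) * (2 * π * I) by
        push_cast; ring, Complex.exp_add, Complex.exp_int_mul_two_pi_mul_I, mul_one]
  rw [fourierCoeffOn_zero_one]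
  simp only [← Complex.exp_add]
  rw [intervalIntegral.integral_congr (g := fun x : ℝ => cexp (-(2 * π * I * (n + z)) * x))
    fun x _ => by ring_nf, integral_exp_mul_complex hc]
  rw [ofReal_one, ofReal_zero, mul_one, mul_zero, Complex.exp_zero, hperiod]
  field_simp
  ring

/-- For `z ∈ ℂ \ ℤ` and real `t ∉ ℤ`, the symmetric limit
`∑_{|n|≤N} e^{2πint}/(2πi(n+z))` converges to `e^{(⌊t⌋-t)2πiz}/(1 - e^{-2πiz})`. -/
theorem affine_bernoulli_series_one
    (z : ℂ) (hz : ∀ m : ℤ, z ≠ (m : ℂ))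
    (t : ℝ) (ht : ∀ m : ℤ, t ≠ (m : ℝ)) :
    Tendsto
      (fun N : ℕ => ∑ n ∈ Finset.Icc (-(N : ℤ)) (N : ℤ),
        Complex.exp (2 * (Real.pi : ℂ) * Complex.I * (n : ℂ) * (t : ℂ)) /
          (2 * (Real.pi : ℂ) * Complex.I * ((n : ℂ) + z)))
      atTop
      (nhds (Complex.exp (((⌊t⌋ : ℂ) - (t : ℂ)) * (2 * (Real.pi : ℂ) * Complex.I) * z) /
        (1 - Complex.exp (-(2 * (Real.pi : ℂ) * Complex.I) * z)))) := by
  have hnz (n : ℤ) : (n : ℂ) + z ≠ 0 := fun h => hz (-n) (by push_cast; linear_combination h)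
  have hden : 1 - cexp (-(2 * π * I) * z) ≠ 0 := by
    rw [sub_ne_zero, ne_comm, Ne, Complex.exp_eq_one_iff]
    rintro ⟨m, hm⟩
    exact hnz m (mul_left_cancel₀ two_pi_I_ne_zero (by linear_combination -hm))
  set g : ℝ → ℂ := fun x => (1 - cexp (-(2 * π * I) * z))⁻¹ * cexp (-(2 * π * I) * z * x)
  have hfract : Int.fract t ∈ Set.Ioo 0 1 :=
    ⟨Int.fract_pos.mpr (ht ⌊t⌋), Int.fract_lt_one t⟩
  have h := tendsto_sum_fourierCoeffOn_mul_exp_of_differentiableAt (f := g)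
    (by fun_prop : Continuous g).continuousOn hfract (by fun_prop)
  convert h using 2
  · refine sum_congr rfl fun n _ => ?_
    rw [fourierCoeffOn.const_mul, fourierCoeffOn_exp_neg_two_pi_I_mul (hnz n),
      exp_two_pi_I_int_mul_fract, ← mul_div_assoc, inv_mul_cancel₀ hden]
    ring
  · simp only [g]
    rw [inv_mul_eq_div, Int.fract]
    push_cast
    ring_nf
end

section
/- Let z be a complex number with z \notin \mathbb{Z} and let 0 < t < 1. Then \sum_{n \in \mathbb{Z}} e^{2\pi i n t}/(2\pi i (n+z))^2 = (e^{-2\pi i z t}/(1 - e^{-2\pi i z})) \cdot (t + 1/(e^{2\pi i z} - 1}). -/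
/-!
As a function of `t ∈ [0, 1]`, the right-hand side `F t` takes the same value at `0` and `1`,
and its `n`-th Fourier coefficient `∫₀¹ e^{-2πinx} F x dx` is `1 / (2πi(n + z))²`: with
`c = -2πi(n + z)` it is an elementary integral of `(x + B) e^{cx}`, and the constant
`B = (e^{2πiz} - 1)⁻¹` is exactly the one for which the boundary terms of order `1 / c` cancel.
These coefficients are absolutely summable, so the Fourier series of the continuous periodic
extension of `F` converges to `F` pointwise.
-/

open Complex
open scoped Real

theorem hasSum_fourierCoeffOn_of_summable {a b : ℝ} (hab : a < b) {F : ℝ → ℂ}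
    (hF : ContinuousOn F (Set.Icc a b)) (hper : F a = F b)
    (hs : Summable (fourierCoeffOn hab F)) {t : ℝ} (ht : t ∈ Set.Ioc a b) :
    HasSum (fun n : ℤ => fourierCoeffOn hab F n • fourier n (t : AddCircle (b - a))) (F t) := by
  have : Fact (0 < b - a) := ⟨sub_pos.mpr hab⟩
  have hb : a + (b - a) = b := add_sub_cancel a b
  let f : C(AddCircle (b - a), ℂ) :=
    ⟨AddCircle.liftIoc (b - a) a F, AddCircle.liftIoc_continuous (by rwa [hb]) (by rwa [hb])⟩
  have hcoeff : fourierCoeff f = fourierCoeffOn hab F := rfl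
  have hft : f t = F t := AddCircle.liftIoc_coe_apply (by rwa [hb])
  rw [← hft, ← hcoeff]
  exact has_pointwise_sum_fourier_series_of_summable (hcoeff ▸ hs) t

theorem integral_ofReal_add_mul_exp {c : ℂ} (hc : c ≠ 0) (B : ℂ) (a b : ℝ) :
    ∫ x in a..b, ((x : ℂ) + B) * exp (c * x) =
      ((b + B) / c - 1 / c ^ 2) * exp (c * b) - ((a + B) / c - 1 / c ^ 2) * exp (c * a) := by
  have hderiv (x : ℝ) : HasDerivAt (fun y : ℝ => (((y : ℂ) + B) / c - 1 / c ^ 2) * exp (c * y))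
      (((x : ℂ) + B) * exp (c * x)) x := by
    have h₁ : HasDerivAt (fun y : ℂ => ((y + B) / c - 1 / c ^ 2) * exp (c * y))
        (1 / c * exp (c * x) + (((x : ℂ) + B) / c - 1 / c ^ 2) * (exp (c * x) * c)) x :=
      ((((hasDerivAt_id _).add_const B).div_const c).sub_const _).mul
        ((hasDerivAt_id _).const_mul c).cexp |>.congr_deriv (by simp)
    convert h₁.comp_ofReal using 1
    field_simp
    ring
  exact intervalIntegral.integral_eq_sub_of_hasDerivAt (fun x _ => hderiv x)
    (Continuous.intervalIntegrable (by fun_prop) a b)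

-- Both sides are `0` when `exp w = 1`.
theorem inv_exp_sub_one_eq (w : ℂ) : (exp w - 1)⁻¹ = exp (-w) / (1 - exp (-w)) := by
  have h : 1 - exp (-w) = (exp w - 1) * exp (-w) := by
    rw [sub_mul, ← exp_add, add_neg_cancel, exp_zero, one_mul]
  rw [h, div_mul_cancel_right₀ (exp_ne_zero _)]

theorem exp_neg_two_pi_I_mul_ne_one {z : ℂ} (hz : ∀ m : ℤ, z ≠ m) :
    exp (-(2 * π * I) * z) ≠ 1 := by
  rw [Ne, exp_eq_one_iff]
  rintro ⟨m, hm⟩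
  refine hz (-m) (mul_left_cancel₀ two_pi_I_ne_zero ?_)
  push_cast
  linear_combination -hm

theorem summable_one_div_two_pi_I_mul_int_add_sq (z : ℂ) :
    Summable fun n : ℤ => 1 / (2 * π * I * ((n : ℂ) + z)) ^ 2 := by
  refine ((EisensteinSeries.linear_right_summable z 1 (k := 2) le_rfl).mul_left
    ((2 * π * I : ℂ) ^ 2)⁻¹).congr fun n => ?_
  simp only [Int.cast_one, one_mul, zpow_ofNat, one_div, mul_pow, mul_inv, add_comm]

noncomputable def affineBernoulliTwo (z : ℂ) (x : ℝ) : ℂ :=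
  exp (-(2 * π * I) * z * x) / (1 - exp (-(2 * π * I) * z)) *
    (x + (exp (2 * π * I * z) - 1)⁻¹)

theorem affineBernoulliTwo_eq (z : ℂ) (x : ℝ) :
    affineBernoulliTwo z x = (1 - exp (-(2 * π * I) * z))⁻¹ *
      (((x : ℂ) + exp (-(2 * π * I) * z) / (1 - exp (-(2 * π * I) * z))) *
        exp (-(2 * π * I) * z * x)) := by
  rw [affineBernoulliTwo, inv_exp_sub_one_eq, neg_mul]
  ring

theorem continuous_affineBernoulliTwo (z : ℂ) : Continuous (affineBernoulliTwo z) := by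
  unfold affineBernoulliTwo
  fun_prop

theorem affineBernoulliTwo_zero_eq_one (z : ℂ) :
    affineBernoulliTwo z 0 = affineBernoulliTwo z 1 := by
  simp only [affineBernoulliTwo_eq, ofReal_zero, ofReal_one, mul_zero, mul_one, exp_zero,
    zero_add]
  generalize exp (-(2 * π * I) * z) = q
  by_cases hq : q = 1
  · simp [hq]
  have : 1 - q ≠ 0 := sub_ne_zero.mpr (Ne.symm hq)
  field_simp
  ring

theorem fourierCoeffOn_affineBernoulliTwo {z : ℂ} (hz : ∀ m : ℤ, z ≠ m) (n : ℤ) :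
    fourierCoeffOn zero_lt_one (affineBernoulliTwo z) n = 1 / (2 * π * I * (n + z)) ^ 2 := by
  set c := -(2 * π * I) * (n + z) with hc_def
  have hc : c ≠ 0 := by
    refine mul_ne_zero (neg_ne_zero.mpr two_pi_I_ne_zero) fun h => hz (-n) ?_
    push_cast
    linear_combination h
  have hcq : exp c = exp (-(2 * π * I) * z) := by
    rw [hc_def, show -(2 * π * I) * (n + z) = (-n : ℤ) * (2 * π * I) + -(2 * π * I) * z by
      push_cast; ring, exp_add, exp_int_mul_two_pi_mul_I, one_mul]
  have hq : 1 - exp c ≠ 0 := sub_ne_zero.mpr (hcq ▸ exp_neg_two_pi_I_mul_ne_one hz).symm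
  have hintegrand (x : ℝ) : fourier (-n) (x : AddCircle (1 - 0 : ℝ)) • affineBernoulliTwo z x =
      (1 - exp c)⁻¹ * (((x : ℂ) + exp c / (1 - exp c)) * exp (c * x)) := by
    have hexp : exp (2 * π * I * (-n : ℤ) * x / (1 - 0 : ℝ)) * exp (-(2 * π * I) * z * x) =
        exp (c * x) := by
      rw [← exp_add, hc_def]
      push_cast
      ring_nf
    rw [affineBernoulliTwo_eq, fourier_coe_apply, ← hcq, smul_eq_mul]
    linear_combination (1 - exp c)⁻¹ * (x + exp c / (1 - exp c)) * hexp
  rw [show (2 * π * I * (n + z)) ^ 2 = c ^ 2 by rw [hc_def]; ring, fourierCoeffOn_eq_integral,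
    intervalIntegral.integral_congr fun x _ => hintegrand x,
    intervalIntegral.integral_const_mul, integral_ofReal_add_mul_exp hc]
  push_cast
  simp only [mul_zero, mul_one, exp_zero, sub_zero, div_one, one_smul]
  field_simp
  ring

/-- For `z ∈ ℂ \ ℤ` and `0 < t < 1`,
`∑_{n∈ℤ} e^{2πint}/(2πi(n+z))² = (e^{-2πizt}/(1-e^{-2πiz}))·(t + 1/(e^{2πiz}-1))`,
the series being absolutely convergent. -/
theorem affine_bernoulli_series_two
    (z : ℂ) (hz : ∀ m : ℤ, z ≠ (m : ℂ))
    (t : ℝ) (h0 : 0 < t) (h1 : t < 1) :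
    Summable (fun n : ℤ =>
      Complex.exp (2 * (Real.pi : ℂ) * Complex.I * (n : ℂ) * (t : ℂ)) /
        (2 * (Real.pi : ℂ) * Complex.I * ((n : ℂ) + z)) ^ 2) ∧
    (∑' n : ℤ,
      Complex.exp (2 * (Real.pi : ℂ) * Complex.I * (n : ℂ) * (t : ℂ)) /
        (2 * (Real.pi : ℂ) * Complex.I * ((n : ℂ) + z)) ^ 2)
      = Complex.exp (-(2 * (Real.pi : ℂ) * Complex.I) * z * (t : ℂ)) /
          (1 - Complex.exp (-(2 * (Real.pi : ℂ) * Complex.I) * z)) *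
        ((t : ℂ) + (Complex.exp (2 * (Real.pi : ℂ) * Complex.I * z) - 1)⁻¹) := by
  have hcoeff := fourierCoeffOn_affineBernoulliTwo hz
  have H := hasSum_fourierCoeffOn_of_summable zero_lt_one
    (continuous_affineBernoulliTwo z).continuousOn (affineBernoulliTwo_zero_eq_one z)
    (funext hcoeff ▸ summable_one_div_two_pi_I_mul_int_add_sq z) ⟨h0, h1.le⟩
  have hterm (n : ℤ) : fourierCoeffOn zero_lt_one (affineBernoulliTwo z) n •
      fourier n (t : AddCircle (1 - 0 : ℝ)) =
      exp (2 * π * I * n * t) / (2 * π * I * (n + z)) ^ 2 := by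
    rw [hcoeff, fourier_coe_apply, smul_eq_mul]
    push_cast
    ring_nf
  rw [funext hterm] at H
  exact ⟨H.summable, H.tsum_eq⟩
end

section
/- Let f : \mathbb{R} \to \mathbb{C} be a smooth function such that f and f^{(k)} are integrable and f, together with its derivatives up to order k, tends to 0 at \pm\infty. Then \sum_{n \in \mathbb{Z}} f(n) = \int_{\mathbb{R}} f(t)\,dt + \frac{(-1)^{k-1}}{k!} \int_{\mathbb{R}} B_k(t - \lfloor t \rfloor) f^{(k)}(t)\,dt, where B_k is the k-th Bernoulli polynomial, provided both sides converge absolutely. -/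
open MeasureTheory Filter

theorem aeval_bern (k : ℕ) (x : ℝ) :
    (Polynomial.aeval ((x : ℝ) : ℂ) (Polynomial.bernoulli k)) = ((bernoulliFun k x : ℝ) : ℂ) := by
  rw [bernoulliFun, Polynomial.eval_map, ← Polynomial.aeval_def]
  have := Polynomial.aeval_algHom_apply (Complex.ofRealAm.restrictScalars ℚ) x (Polynomial.bernoulli k)
  simpa using this

noncomputable def bfC (m : ℕ) (a : ℝ) : ℝ → ℂ := fun t => ((bernoulliFun m (t - a) : ℝ) : ℂ)

theorem bfC_cont (m : ℕ) (a : ℝ) : Continuous (bfC m a) := by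
  apply Complex.continuous_ofReal.comp
  exact (by unfold bernoulliFun; exact Polynomial.continuous _ : Continuous (bernoulliFun m)).comp
    (continuous_sub_right a)

theorem bfC_hasDeriv (m : ℕ) (a : ℝ) (t : ℝ) :
    HasDerivAt (bfC (m+1) a) ((m+1) * bfC m a t) t := by
  have h1 := (hasDerivAt_bernoulliFun (m+1) (t - a)).comp t ((hasDerivAt_id t).sub_const a)
  simp only [mul_one, Nat.add_sub_cancel] at h1
  have := h1.ofReal_comp
  convert this using 1
  · funext y; simp [bfC]
  · simp [bfC]

theorem bfC_antideriv (m : ℕ) (a : ℝ) (t : ℝ) :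
    HasDerivAt (fun t => bfC (m+1) a t / (m+1)) (bfC m a t) t := by
  have hne : ((m : ℂ) + 1) ≠ 0 := Nat.cast_add_one_ne_zero m
  have h := (bfC_hasDeriv m a t).div_const ((m : ℂ) + 1)
  rw [mul_div_cancel_left₀ _ hne] at h
  exact h

theorem bfC_left (m : ℕ) (a : ℝ) : bfC m a a = ((bernoulli m : ℚ) : ℂ) := by
  simp [bfC, bernoulliFun_eval_zero]

theorem bfC_right (m : ℕ) (hm : m ≠ 1) (a : ℝ) : bfC m a (a + 1) = ((bernoulli m : ℚ) : ℂ) := by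
  simp [bfC, add_sub_cancel_left, bernoulliFun_endpoints_eq_of_ne_one hm, bernoulliFun_eval_zero]

theorem bfC_one_left (a : ℝ) : bfC 1 a a = -(1/2 : ℂ) := by
  rw [bfC_left]; norm_num [bernoulli_one]

theorem bfC_one_right (a : ℝ) : bfC 1 a (a + 1) = (1/2 : ℂ) := by
  simp only [bfC, add_sub_cancel_left, bernoulliFun_eval_one, bernoulliFun_eval_zero]
  norm_num [bernoulli_one]

section
variable (f : ℝ → ℂ) (hsmooth : ContDiff ℝ (⊤ : ℕ∞) f)
include hsmooth

theorem Fcont (j : ℕ) : Continuous (iteratedDeriv j f) :=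
  hsmooth.continuous_iteratedDeriv j (by exact_mod_cast le_top)

theorem FhasDeriv (j : ℕ) (t : ℝ) :
    HasDerivAt (iteratedDeriv j f) (iteratedDeriv (j+1) f t) t := by
  rw [iteratedDeriv_succ]
  exact ((hsmooth.differentiable_iteratedDeriv j (by exact_mod_cast ENat.coe_lt_top j)) t).hasDerivAt

theorem base_step (a : ℝ) :
    ∫ t in a..a+1, ((bernoulliFun 1 (t-a) : ℝ) : ℂ) * iteratedDeriv 1 f t
      = (f a + f (a+1))/2 - ∫ t in a..a+1, f t := by
  have hu : ∀ x ∈ Set.uIcc a (a+1), HasDerivAt (bfC 1 a) ((1:ℂ)) x := by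
    intro x _
    have := bfC_hasDeriv 0 a x
    simpa [bfC, bernoulliFun] using this
  have hv : ∀ x ∈ Set.uIcc a (a+1), HasDerivAt f (iteratedDeriv 1 f x) x := by
    intro x _
    simpa [iteratedDeriv_zero] using FhasDeriv f hsmooth 0 x
  have key := intervalIntegral.integral_mul_deriv_eq_deriv_mul hu hv
    (continuous_const.intervalIntegrable a (a+1))
    ((Fcont f hsmooth 1).intervalIntegrable a (a+1))
  have e0 : ∫ t in a..a+1, ((bernoulliFun 1 (t-a) : ℝ) : ℂ) * iteratedDeriv 1 f t
      = ∫ t in a..a+1, bfC 1 a t * iteratedDeriv 1 f t := rfl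
  rw [e0, key, bfC_one_right, bfC_one_left]
  have e1 : ∫ x in a..a+1, (1:ℂ) * f x = ∫ x in a..a+1, f x := by simp
  rw [e1]
  ring

theorem ind_step (j : ℕ) (hj : 1 ≤ j) (a : ℝ) :
    ∫ t in a..a+1, bfC j a t * iteratedDeriv j f t
      = ((bernoulli (j+1) : ℚ) : ℂ)/(j+1) *
          (iteratedDeriv j f (a+1) - iteratedDeriv j f a)
        - (1/((j:ℂ)+1)) * ∫ t in a..a+1, bfC (j+1) a t * iteratedDeriv (j+1) f t := by
  have hu : ∀ x ∈ Set.uIcc a (a+1), HasDerivAt (fun t => bfC (j+1) a t / ((j:ℂ)+1)) (bfC j a x) x :=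
    fun x _ => by simpa using bfC_antideriv j a x
  have hv : ∀ x ∈ Set.uIcc a (a+1),
      HasDerivAt (iteratedDeriv j f) (iteratedDeriv (j+1) f x) x :=
    fun x _ => FhasDeriv f hsmooth j x
  have key := intervalIntegral.integral_mul_deriv_eq_deriv_mul hv hu
    ((Fcont f hsmooth (j+1)).intervalIntegrable a (a+1))
    ((bfC_cont j a).intervalIntegrable a (a+1))
  have e1 : ∫ t in a..a+1, bfC j a t * iteratedDeriv j f t
      = ∫ t in a..a+1, iteratedDeriv j f t * bfC j a t := by
    apply intervalIntegral.integral_congr; intro x _; ring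
  have e2 : ∫ t in a..a+1, iteratedDeriv (j+1) f t * (bfC (j+1) a t / ((j:ℂ)+1))
      = (1/((j:ℂ)+1)) * ∫ t in a..a+1, bfC (j+1) a t * iteratedDeriv (j+1) f t := by
    rw [← intervalIntegral.integral_const_mul]
    apply intervalIntegral.integral_congr; intro x _; ring
  rw [e1, key, e2, bfC_right (j+1) (by omega) a, bfC_left]
  push_cast
  ring

theorem interval_formula (k : ℕ) (hk : 1 ≤ k) (a : ℝ) :
    ((-1:ℂ)^(k-1)/(Nat.factorial k : ℂ)) * ∫ t in a..a+1, bfC k a t * iteratedDeriv k f t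
      = (f a + f (a+1))/2 - (∫ t in a..a+1, f t)
        + ∑ j ∈ Finset.Ico 2 (k+1),
            ((-1:ℂ)^(j-1) * ((bernoulli j : ℚ):ℂ) / (Nat.factorial j : ℂ)) *
            (iteratedDeriv (j-1) f (a+1) - iteratedDeriv (j-1) f a) := by
  induction k, hk using Nat.le_induction with
  | base =>
      simp only [Finset.Ico_self, Finset.sum_empty, add_zero, Nat.factorial_one, Nat.cast_one,
        pow_zero, Nat.sub_self]
      simpa [bfC] using base_step f hsmooth a
  | succ k hk IH =>
      have hstep := ind_step f hsmooth k hk a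
      rw [Finset.sum_Ico_succ_top (by omega : 2 ≤ k+1), ← add_assoc, ← IH]
      have hfac : ((Nat.factorial (k+1) : ℂ)) = ((k:ℂ)+1) * (Nat.factorial k : ℂ) := by
        push_cast [Nat.factorial_succ]; ring
      have hpow : (-1:ℂ)^k = (-1:ℂ)^(k-1) * (-1) := by
        rw [← pow_succ]; congr 1; omega
      have hfk : (Nat.factorial k : ℂ) ≠ 0 := by exact_mod_cast Nat.factorial_ne_zero k
      have hk1 : ((k:ℂ)+1) ≠ 0 := Nat.cast_add_one_ne_zero k
      have hstep2 : (∫ t in a..a+1, bfC (k+1) a t * iteratedDeriv (k+1) f t)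
          = ((bernoulli (k+1) : ℚ):ℂ) * (iteratedDeriv k f (a+1) - iteratedDeriv k f a)
            - ((k:ℂ)+1) * ∫ t in a..a+1, bfC k a t * iteratedDeriv k f t := by
        field_simp at hstep
        linear_combination hstep
      simp only [Nat.add_sub_cancel]
      rw [hstep2, hfac, hpow]
      field_simp
      ring

end

theorem fract_integral (m : ℕ) (n : ℤ) (g : ℝ → ℂ) :
    (∫ t in (n:ℝ)..(n:ℝ)+1,
      (Polynomial.aeval ((Int.fract t : ℝ):ℂ) (Polynomial.bernoulli m)) * g t)
    = ∫ t in (n:ℝ)..(n:ℝ)+1, bfC m n t * g t := by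
  apply intervalIntegral.integral_congr_ae
  have h0 : ∀ᵐ x : ℝ, x ≠ ((n:ℝ)+1) := by
    rw [ae_iff]
    simpa using measure_singleton ((n:ℝ)+1)
  filter_upwards [h0] with t ht htmem
  have hle : (n:ℝ) ≤ (n:ℝ)+1 := by linarith
  rw [Set.uIoc_of_le hle] at htmem
  have hlt : t < (n:ℝ)+1 := lt_of_le_of_ne htmem.2 ht
  have hfloor : ⌊t⌋ = n := by
    rw [Int.floor_eq_iff]
    exact ⟨le_of_lt htmem.1, by exact_mod_cast hlt⟩
  have hfr : Int.fract t = t - n := by rw [Int.fract, hfloor]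
  rw [hfr, aeval_bern]
  rfl

def sIco (N : ℕ) : Finset ℤ :=
  (Finset.range (2*N)).map ⟨fun i : ℕ => -(N:ℤ) + (i:ℤ), fun a b h => by simpa using h⟩

theorem mem_sIco {x : ℤ} {N : ℕ} : x ∈ sIco N ↔ -(N:ℤ) ≤ x ∧ x < N := by
  simp only [sIco, Finset.mem_map, Finset.mem_range, Function.Embedding.coeFn_mk]
  dsimp only [DFunLike.coe]
  constructor
  · rintro ⟨i, hi, rfl⟩; omega
  · intro h; exact ⟨(x + N).toNat, by omega, by omega⟩

theorem sIco_mono : Monotone sIco := fun M N h x hx => by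
  rw [mem_sIco] at *
  constructor <;> [skip; skip] <;> omega

theorem sIco_tendsto : Tendsto sIco atTop atTop :=
  tendsto_atTop_finset_of_monotone sIco_mono (fun x => ⟨x.natAbs + 1, by rw [mem_sIco]; omega⟩)


/-- Euler–MacLaurin formula on the real line. Let `f : ℝ → ℂ` be smooth,
with `f` and `f^{(k)}` integrable, `f` and its derivatives up to order `k` tending to `0`
at `±∞`, and with `∑_{n∈ℤ} f(n)` absolutely convergent. Then
`∑_{n∈ℤ} f(n) = ∫ f + ((-1)^{k-1}/k!) ∫ B_k(t - ⌊t⌋) f^{(k)}(t) dt`. -/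
theorem euler_maclaurin_real_line
    (k : ℕ) (hk : 1 ≤ k) (f : ℝ → ℂ)
    (hsmooth : ContDiff ℝ (⊤ : ℕ∞) f)
    (hint : Integrable f)
    (hintk : Integrable (iteratedDeriv k f))
    (hintprod : Integrable (fun t : ℝ =>
      (Polynomial.aeval ((Int.fract t : ℝ) : ℂ) (Polynomial.bernoulli k)) *
        iteratedDeriv k f t))
    (hdecay : ∀ j ≤ k, Tendsto (iteratedDeriv j f) atTop (nhds 0) ∧
      Tendsto (iteratedDeriv j f) atBot (nhds 0))
    (hsum : Summable (fun n : ℤ => ‖f n‖)) :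
    ∑' n : ℤ, f n
      = (∫ t : ℝ, f t)
        + ((-1 : ℂ) ^ (k - 1) / (Nat.factorial k : ℂ)) *
          ∫ t : ℝ, (Polynomial.aeval ((Int.fract t : ℝ) : ℂ) (Polynomial.bernoulli k)) *
            iteratedDeriv k f t := by
  have hper : ∀ n : ℤ,
      ((-1:ℂ)^(k-1)/(Nat.factorial k : ℂ)) *
        (∫ t in (n:ℝ)..(n:ℝ)+1,
          (Polynomial.aeval ((Int.fract t : ℝ) : ℂ) (Polynomial.bernoulli k)) *
            iteratedDeriv k f t)
      = (f (n:ℝ) + f ((n:ℝ)+1))/2 - (∫ t in (n:ℝ)..(n:ℝ)+1, f t)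
        + ∑ j ∈ Finset.Ico 2 (k+1),
            ((-1:ℂ)^(j-1) * ((bernoulli j : ℚ):ℂ) / (Nat.factorial j : ℂ)) *
            (iteratedDeriv (j-1) f ((n:ℝ)+1) - iteratedDeriv (j-1) f (n:ℝ)) := by
    intro n
    rw [fract_integral k n (iteratedDeriv k f)]
    exact interval_formula f hsmooth k hk (n:ℝ)
  have key : ∀ N : ℕ,
      ((-1:ℂ)^(k-1)/(Nat.factorial k : ℂ)) *
        (∫ t in (-(N:ℝ))..(N:ℝ),
          (Polynomial.aeval ((Int.fract t : ℝ) : ℂ) (Polynomial.bernoulli k)) *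
            iteratedDeriv k f t)
      = ((∑ i ∈ Finset.range (2*N), f (-(N:ℝ) + i)) + (f (N:ℝ) - f (-(N:ℝ)))/2
          - (∫ t in (-(N:ℝ))..(N:ℝ), f t))
        + ∑ j ∈ Finset.Ico 2 (k+1),
            ((-1:ℂ)^(j-1) * ((bernoulli j : ℚ):ℂ) / (Nat.factorial j : ℂ)) *
            (iteratedDeriv (j-1) f (N:ℝ) - iteratedDeriv (j-1) f (-(N:ℝ))) := by
    intro N
    set a : ℕ → ℝ := fun i => -(N:ℝ) + i with ha
    have hsucc : ∀ i : ℕ, a (i+1) = a i + 1 := by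
      intro i; simp only [ha]; push_cast; ring
    have ha0 : a 0 = -(N:ℝ) := by simp [ha]
    have haN : a (2*N) = (N:ℝ) := by simp only [ha]; push_cast; ring
    have hadj : ∀ (g : ℝ → ℂ), Integrable g →
        (∑ i ∈ Finset.range (2*N), ∫ t in a i..a i + 1, g t)
          = ∫ t in (-(N:ℝ))..(N:ℝ), g t := by
      intro g hg
      have h1 : ∀ i ∈ Finset.range (2*N),
          (∫ t in a i..a i + 1, g t) = ∫ t in a i..a (i+1), g t := by
        intro i _; rw [hsucc]
      rw [Finset.sum_congr rfl h1,
        intervalIntegral.sum_integral_adjacent_intervals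
          (fun i _ => hg.intervalIntegrable), ha0, haN]
    have hcast : ∀ i : ℕ, ((-(N:ℤ) + (i:ℤ) : ℤ) : ℝ) = a i := by
      intro i; simp only [ha]; push_cast; ring
    have hper' : ∀ i : ℕ,
        ((-1:ℂ)^(k-1)/(Nat.factorial k : ℂ)) *
          (∫ t in a i..a i + 1,
            (Polynomial.aeval ((Int.fract t : ℝ) : ℂ) (Polynomial.bernoulli k)) *
              iteratedDeriv k f t)
        = (f (a i) + f (a i + 1))/2 - (∫ t in a i..a i + 1, f t)
          + ∑ j ∈ Finset.Ico 2 (k+1),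
              ((-1:ℂ)^(j-1) * ((bernoulli j : ℚ):ℂ) / (Nat.factorial j : ℂ)) *
              (iteratedDeriv (j-1) f (a i + 1) - iteratedDeriv (j-1) f (a i)) := by
      intro i
      have := hper (-(N:ℤ) + (i:ℤ))
      rwa [hcast i] at this
    rw [← hadj _ hintprod, Finset.mul_sum]
    rw [Finset.sum_congr rfl (fun i _ => hper' i)]
    have T1 : ∑ i ∈ Finset.range (2*N), (f (a i) + f (a i + 1))/2
        = (∑ i ∈ Finset.range (2*N), f (a i)) + (f (N:ℝ) - f (-(N:ℝ)))/2 := by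
      have h2 : ∀ i ∈ Finset.range (2*N),
          (f (a i) + f (a i + 1))/2 = f (a i) + (f (a (i+1)) - f (a i))/2 := by
        intro i _; rw [hsucc]; ring
      rw [Finset.sum_congr rfl h2, Finset.sum_add_distrib, ← Finset.sum_div,
        Finset.sum_range_sub (fun i => f (a i)), ha0, haN]
    have T3 : ∑ i ∈ Finset.range (2*N), ∑ j ∈ Finset.Ico 2 (k+1),
          ((-1:ℂ)^(j-1) * ((bernoulli j : ℚ):ℂ) / (Nat.factorial j : ℂ)) *
          (iteratedDeriv (j-1) f (a i + 1) - iteratedDeriv (j-1) f (a i))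
        = ∑ j ∈ Finset.Ico 2 (k+1),
          ((-1:ℂ)^(j-1) * ((bernoulli j : ℚ):ℂ) / (Nat.factorial j : ℂ)) *
          (iteratedDeriv (j-1) f (N:ℝ) - iteratedDeriv (j-1) f (-(N:ℝ))) := by
      rw [Finset.sum_comm]
      refine Finset.sum_congr rfl fun j _ => ?_
      have h3 : ∀ i ∈ Finset.range (2*N),
          ((-1:ℂ)^(j-1) * ((bernoulli j : ℚ):ℂ) / (Nat.factorial j : ℂ)) *
            (iteratedDeriv (j-1) f (a i + 1) - iteratedDeriv (j-1) f (a i))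
          = ((-1:ℂ)^(j-1) * ((bernoulli j : ℚ):ℂ) / (Nat.factorial j : ℂ)) *
            (iteratedDeriv (j-1) f (a (i+1)) - iteratedDeriv (j-1) f (a i)) := by
        intro i _; rw [hsucc]
      rw [Finset.sum_congr rfl h3, ← Finset.mul_sum,
        Finset.sum_range_sub (fun i => iteratedDeriv (j-1) f (a i)), ha0, haN]
    rw [Finset.sum_add_distrib, Finset.sum_sub_distrib, T1, T3, hadj f hint]
  -- limits
  have htop : Tendsto (fun N : ℕ => (N:ℝ)) atTop atTop := tendsto_natCast_atTop_atTop
  have hbot : Tendsto (fun N : ℕ => -(N:ℝ)) atTop atBot :=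
    tendsto_neg_atTop_atBot.comp tendsto_natCast_atTop_atTop
  have hIG : Tendsto (fun N : ℕ => ∫ t in (-(N:ℝ))..(N:ℝ),
      (Polynomial.aeval ((Int.fract t : ℝ) : ℂ) (Polynomial.bernoulli k)) *
        iteratedDeriv k f t) atTop
      (nhds (∫ t : ℝ, (Polynomial.aeval ((Int.fract t : ℝ) : ℂ) (Polynomial.bernoulli k)) *
        iteratedDeriv k f t)) :=
    intervalIntegral_tendsto_integral hintprod hbot htop
  have hIf : Tendsto (fun N : ℕ => ∫ t in (-(N:ℝ))..(N:ℝ), f t) atTop (nhds (∫ t : ℝ, f t)) :=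
    intervalIntegral_tendsto_integral hint hbot htop
  have hS : Summable (fun n : ℤ => f n) := Summable.of_norm hsum
  have hsum_eq : ∀ N : ℕ, ∑ n ∈ sIco N, f (n:ℝ) = ∑ i ∈ Finset.range (2*N), f (-(N:ℝ) + i) := by
    intro N
    rw [sIco, Finset.sum_map]
    refine Finset.sum_congr rfl fun i _ => ?_
    congr 1
    dsimp only [DFunLike.coe]
    push_cast
    ring
  have hT : Tendsto (fun N : ℕ => ∑ i ∈ Finset.range (2*N), f (-(N:ℝ) + i)) atTop
      (nhds (∑' n : ℤ, f n)) := by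
    have h := hS.hasSum.comp sIco_tendsto
    exact Tendsto.congr hsum_eq h
  have hhalf : Tendsto (fun N : ℕ => (f (N:ℝ) - f (-(N:ℝ)))/2) atTop (nhds 0) := by
    have h0 := hdecay 0 (by omega)
    rw [iteratedDeriv_zero] at h0
    have := ((h0.1.comp htop).sub (h0.2.comp hbot)).div_const (2:ℂ)
    simpa using this
  have hbound : Tendsto (fun N : ℕ => ∑ j ∈ Finset.Ico 2 (k+1),
      ((-1:ℂ)^(j-1) * ((bernoulli j : ℚ):ℂ) / (Nat.factorial j : ℂ)) *
      (iteratedDeriv (j-1) f (N:ℝ) - iteratedDeriv (j-1) f (-(N:ℝ)))) atTop (nhds 0) := by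
    have hterm : ∀ j ∈ Finset.Ico 2 (k+1), Tendsto (fun N : ℕ =>
        ((-1:ℂ)^(j-1) * ((bernoulli j : ℚ):ℂ) / (Nat.factorial j : ℂ)) *
        (iteratedDeriv (j-1) f (N:ℝ) - iteratedDeriv (j-1) f (-(N:ℝ)))) atTop (nhds 0) := by
      intro j hj
      have hj' : j - 1 ≤ k := by
        simp only [Finset.mem_Ico] at hj; omega
      have hd := hdecay (j-1) hj'
      have := ((hd.1.comp htop).sub (hd.2.comp hbot)).const_mul
        ((-1:ℂ)^(j-1) * ((bernoulli j : ℚ):ℂ) / (Nat.factorial j : ℂ))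
      simpa using this
    have := tendsto_finset_sum _ hterm
    simpa using this
  have hRHS : Tendsto (fun N : ℕ =>
      ((∑ i ∈ Finset.range (2*N), f (-(N:ℝ) + i)) + (f (N:ℝ) - f (-(N:ℝ)))/2
        - (∫ t in (-(N:ℝ))..(N:ℝ), f t))
      + ∑ j ∈ Finset.Ico 2 (k+1),
          ((-1:ℂ)^(j-1) * ((bernoulli j : ℚ):ℂ) / (Nat.factorial j : ℂ)) *
          (iteratedDeriv (j-1) f (N:ℝ) - iteratedDeriv (j-1) f (-(N:ℝ)))) atTop
      (nhds (((∑' n : ℤ, f n) + 0 - (∫ t : ℝ, f t)) + 0)) :=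
    ((hT.add hhalf).sub hIf).add hbound
  have hLHS : Tendsto (fun N : ℕ =>
      ((-1:ℂ)^(k-1)/(Nat.factorial k : ℂ)) *
        (∫ t in (-(N:ℝ))..(N:ℝ),
          (Polynomial.aeval ((Int.fract t : ℝ) : ℂ) (Polynomial.bernoulli k)) *
            iteratedDeriv k f t)) atTop
      (nhds (((-1:ℂ)^(k-1)/(Nat.factorial k : ℂ)) *
        ∫ t : ℝ, (Polynomial.aeval ((Int.fract t : ℝ) : ℂ) (Polynomial.bernoulli k)) *
          iteratedDeriv k f t)) := hIG.const_mul _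
  have hfin := tendsto_nhds_unique hLHS (Tendsto.congr (fun N => (key N).symm) hRHS)
  rw [add_zero, add_zero] at hfin
  linear_combination -hfin
end

section
/- Let X = [v_1, \ldots, v_m] be a finite list of vectors in \mathbb{R}^n spanning a pointed cone (i.e., there exists u \in (\mathbb{R}^n)^* with \langle u, v_i \rangle > 0 for all i). Then for every Schwartz function f on \mathbb{R}^n, the integral \int_0^\infty \cdots \int_0^\infty f(\sum_{i=1}^m t_i v_i)\, dt_1 \cdots dt_m converges absolutely, and the resulting linear functional T(X) on Schwartz functions is a tempered distribution. Moreover, for each v_j \in X, the distributional derivative satisfies \partial_{v_j} T(X) = T(X - \{v_j\}). -/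
/-!
`T(X)` is integration against the image of Lebesgue measure on the orthant `[0, ∞)^X` under
`t ↦ ∑ tᵢ vᵢ`. Pointedness gives `tᵢ ≤ C ‖∑ tⱼ vⱼ‖` on the orthant, so `(1 + ‖x‖)^(-2|X|)` is
integrable for this measure: it has temperate growth, and integrating Schwartz functions against
such a measure is a continuous functional. For the derivative, integrate out `t_j` first: along
the ray `r ↦ y + r vⱼ` the integrand is the derivative of `r ↦ f (y + r vⱼ)`, so the fundamental
theorem of calculus on `[0, ∞)` leaves `-f y`, as `f` vanishes at infinity.
-/

open MeasureTheory Filter Set Topology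

section PointedCone

variable {E : Type*} [SeminormedAddCommGroup E] [NormedSpace ℝ E] {ι : Type*} [Fintype ι]
  {v : ι → E} {u : StrongDual ℝ E}

lemma coord_le_mul_norm_sum_smul (hu : ∀ i, 0 < u (v i)) {t : ι → ℝ} (ht : 0 ≤ t) (i : ι) :
    t i ≤ ‖u‖ / u (v i) * ‖∑ j, t j • v j‖ := by
  rw [div_mul_eq_mul_div, le_div_iff₀ (hu i)]
  calc t i * u (v i) ≤ ∑ j, t j * u (v j) :=
        Finset.single_le_sum (fun j _ => mul_nonneg (ht j) (hu j).le) (Finset.mem_univ i)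
    _ = u (∑ j, t j • v j) := by simp
    _ ≤ ‖u‖ * ‖∑ j, t j • v j‖ := (le_abs_self _).trans (u.le_opNorm _)

lemma exists_prod_one_add_sq_le (hu : ∀ i, 0 < u (v i)) :
    ∃ B : ℝ, ∀ t : ι → ℝ, 0 ≤ t →
      ∏ i, (1 + t i ^ 2) ≤ B * (1 + ‖∑ i, t i • v i‖) ^ (2 * Fintype.card ι) := by
  refine ⟨∏ i, max 1 (‖u‖ / u (v i)) ^ 2, fun t ht => ?_⟩
  set x := ∑ i, t i • v i
  have hcoord (i : ι) : 1 + t i ^ 2 ≤ (max 1 (‖u‖ / u (v i)) * (1 + ‖x‖)) ^ 2 := by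
    have hti : t i ≤ ‖u‖ / u (v i) * ‖x‖ := coord_le_mul_norm_sum_smul hu ht i
    have hlin : 1 + t i ≤ max 1 (‖u‖ / u (v i)) * (1 + ‖x‖) := by
      nlinarith [norm_nonneg x, le_max_left 1 (‖u‖ / u (v i)),
        mul_le_mul_of_nonneg_right (le_max_right 1 (‖u‖ / u (v i))) (norm_nonneg x)]
    have hti0 : 0 ≤ t i := ht i
    calc 1 + t i ^ 2 ≤ (1 + t i) ^ 2 := by nlinarith
      _ ≤ _ := pow_le_pow_left₀ (by positivity) hlin 2
  calc ∏ i, (1 + t i ^ 2) ≤ ∏ i, (max 1 (‖u‖ / u (v i)) * (1 + ‖x‖)) ^ 2 :=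
        Finset.prod_le_prod (fun i _ => by positivity) (fun i _ => hcoord i)
    _ = _ := by
        simp_rw [mul_pow, Finset.prod_mul_distrib, Finset.prod_const, Finset.card_univ, pow_mul]

end PointedCone

section SplineMeasure

variable {E : Type*} [NormedAddCommGroup E] [NormedSpace ℝ E] [MeasurableSpace E] [BorelSpace E]
  {ι : Type*} [Fintype ι] {F : Type*} [NormedAddCommGroup F]

lemma integrable_prod_inv_one_add_sq : Integrable (fun t : ι → ℝ => ∏ i, (1 + t i ^ 2)⁻¹) :=
  Integrable.fintype_prod (f := fun _ r => (1 + r ^ 2)⁻¹) fun _ => integrable_inv_one_add_sq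

noncomputable def splineMeasure (v : ι → E) : Measure E :=
  (volume.restrict (Ici (0 : ι → ℝ))).map fun t => ∑ i, t i • v i

lemma integrable_splineMeasure_iff {v : ι → E} {g : E → F}
    (hg : AEStronglyMeasurable g (splineMeasure v)) :
    Integrable g (splineMeasure v) ↔
      IntegrableOn (fun t => g (∑ i, t i • v i)) (Ici (0 : ι → ℝ)) :=
  integrable_map_measure hg (by fun_prop : Continuous fun t : ι → ℝ => ∑ i, t i • v i).aemeasurable

lemma integral_splineMeasure [NormedSpace ℝ F] {v : ι → E} {g : E → F}
    (hg : AEStronglyMeasurable g (splineMeasure v)) :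
    ∫ x, g x ∂splineMeasure v = ∫ t in Ici (0 : ι → ℝ), g (∑ i, t i • v i) :=
  integral_map (by fun_prop : Continuous fun t : ι → ℝ => ∑ i, t i • v i).aemeasurable hg

lemma hasTemperateGrowth_splineMeasure {v : ι → E} {u : StrongDual ℝ E}
    (hu : ∀ i, 0 < u (v i)) : (splineMeasure v).HasTemperateGrowth := by
  refine ⟨2 * Fintype.card ι, ?_⟩
  rw [integrable_splineMeasure_iff (Measurable.aestronglyMeasurable (by fun_prop))]
  obtain ⟨B, hB⟩ := exists_prod_one_add_sq_le hu
  have hL : Measurable fun t : ι → ℝ => ∑ i, t i • v i := (by fun_prop : Continuous _).measurable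
  refine (integrable_prod_inv_one_add_sq.integrableOn.const_mul B).mono'
    (Measurable.aestronglyMeasurable (by fun_prop)) ?_
  filter_upwards [ae_restrict_mem measurableSet_Ici] with t ht
  have hP : 0 < ∏ i, (1 + t i ^ 2) := Finset.prod_pos fun i _ => by positivity
  rw [Real.norm_of_nonneg (by positivity), Real.rpow_neg (by positivity), Real.rpow_natCast,
    Finset.prod_inv_distrib, ← div_eq_mul_inv, le_div_iff₀ hP, inv_mul_le_iff₀ (by positivity)]
  exact (hB t ht).trans_eq (mul_comm _ _)

end SplineMeasure

section Orthant

variable {F : Type*} [NormedAddCommGroup F] {m : ℕ}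

lemma measurePreserving_piFinSuccAbove_restrict_Ici (j : Fin (m + 1)) :
    MeasurePreserving (MeasurableEquiv.piFinSuccAbove (fun _ => ℝ) j)
      (volume.restrict (Ici 0)) ((volume.restrict (Ici 0)).prod (volume.restrict (Ici 0))) := by
  have hpi (k : ℕ) : volume.restrict (Ici (0 : Fin k → ℝ)) =
      Measure.pi fun _ => volume.restrict (Ici 0) := by
    rw [← pi_univ_Ici, volume_pi, Measure.restrict_pi_pi]
    rfl
  rw [hpi, hpi]
  exact measurePreserving_piFinSuccAbove _ j

lemma integrable_prod_insertNth {j : Fin (m + 1)} {g : (Fin (m + 1) → ℝ) → F}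
    (hg : IntegrableOn g (Ici 0)) :
    Integrable (fun p : ℝ × (Fin m → ℝ) => g (j.insertNth p.1 p.2))
      ((volume.restrict (Ici 0)).prod (volume.restrict (Ici 0))) :=
  ((measurePreserving_piFinSuccAbove_restrict_Ici j).symm.integrable_comp_emb
    (MeasurableEquiv.measurableEmbedding _)).2 hg

lemma ae_integrableOn_comp_insertNth {j : Fin (m + 1)} {g : (Fin (m + 1) → ℝ) → F}
    (hg : IntegrableOn g (Ici 0)) :
    ∀ᵐ s ∂volume.restrict (Ici (0 : Fin m → ℝ)),
      IntegrableOn (fun r => g (j.insertNth r s)) (Ici 0) :=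
  (integrable_prod_insertNth hg).prod_left_ae

lemma integral_Ici_eq_integral_integral_insertNth [NormedSpace ℝ F] (j : Fin (m + 1))
    {g : (Fin (m + 1) → ℝ) → F} (hg : IntegrableOn g (Ici 0)) :
    ∫ t in Ici 0, g t = ∫ s in Ici (0 : Fin m → ℝ), ∫ r in Ici 0, g (j.insertNth r s) := by
  rw [← integral_prod_symm _ (integrable_prod_insertNth hg)]
  exact ((measurePreserving_piFinSuccAbove_restrict_Ici j).symm.integral_comp' g).symm

lemma sum_insertNth_smul {E : Type*} [AddCommMonoid E] [Module ℝ E] (v : Fin (m + 1) → E)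
    (j : Fin (m + 1)) (r : ℝ) (s : Fin m → ℝ) :
    ∑ i, (j.insertNth r s : Fin (m + 1) → ℝ) i • v i =
      ∑ i, s i • v (j.succAbove i) + r • v j := by
  rw [Fin.sum_univ_succAbove _ j, add_comm]
  simp

end Orthant

lemma tendsto_add_smul_atTop_cocompact {E : Type*} [NormedAddCommGroup E] [NormedSpace ℝ E]
    (y : E) {w : E} (hw : w ≠ 0) : Tendsto (fun r : ℝ => y + r • w) atTop (cocompact E) := by
  refine tendsto_cocompact_of_tendsto_dist_comp_atTop y ?_
  simp only [dist_self_add_left, norm_smul, Real.norm_eq_abs]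
  exact tendsto_abs_atTop_atTop.atTop_mul_const (norm_pos_iff.2 hw)

namespace SchwartzMap

variable {E F : Type*} [NormedAddCommGroup E] [NormedSpace ℝ E] [ProperSpace E]
  [NormedAddCommGroup F] [NormedSpace ℝ F] [CompleteSpace F]

lemma integral_Ici_fderiv_add_smul (f : 𝓢(E, F)) (y : E) {w : E} (hw : w ≠ 0)
    (hint : IntegrableOn (fun r : ℝ => fderiv ℝ f (y + r • w) w) (Ici 0)) :
    ∫ r in Ici (0 : ℝ), fderiv ℝ f (y + r • w) w = -f y := by
  have hderiv (r : ℝ) : HasDerivAt (fun r : ℝ => f (y + r • w)) (fderiv ℝ f (y + r • w) w) r := by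
    refine f.differentiableAt.hasFDerivAt.comp_hasDerivAt r ?_
    simpa using ((hasDerivAt_id r).smul_const w).const_add y
  rw [integral_Ici_eq_integral_Ioi, integral_Ioi_of_hasDerivAt_of_tendsto' (fun r _ => hderiv r)
    (hint.mono_set Ioi_subset_Ici_self)
    ((f.tendsto_cocompact).comp (tendsto_add_smul_atTop_cocompact y hw))]
  simp

end SchwartzMap

/-- Let `X = [v₀,…,v_m]` be a list of vectors in `ℝ^n` spanning a pointed
cone (there is `u` with `⟨u, vᵢ⟩ > 0` for all `i`). Then for every Schwartz function `f`,
the integral `∫_{[0,∞)^{m+1}} f(∑ tᵢ vᵢ) dt` converges absolutely; the resulting linear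
functional `T(X)` is a tempered distribution; and for each `vⱼ` the distributional
derivative satisfies `∂_{vⱼ} T(X) = T(X - {vⱼ})`, i.e.
`-∫_{[0,∞)^{m+1}} (∂_{vⱼ}f)(∑ tᵢ vᵢ) dt = ∫_{[0,∞)^m} f(∑_{i≠j} tᵢ vᵢ) dt`. -/
theorem multispline_tempered_and_derivative
    (n m : ℕ) (v : Fin (m + 1) → EuclideanSpace ℝ (Fin n))
    (hpointed : ∃ u : Module.Dual ℝ (EuclideanSpace ℝ (Fin n)), ∀ i, 0 < u (v i)) :
    (∀ f : SchwartzMap (EuclideanSpace ℝ (Fin n)) ℂ,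
      IntegrableOn (fun t : Fin (m + 1) → ℝ => f (∑ i, t i • v i))
        {t : Fin (m + 1) → ℝ | ∀ i, 0 ≤ t i}) ∧
    (∃ T : SchwartzMap (EuclideanSpace ℝ (Fin n)) ℂ →L[ℂ] ℂ,
      ∀ f : SchwartzMap (EuclideanSpace ℝ (Fin n)) ℂ,
        T f = ∫ t in {t : Fin (m + 1) → ℝ | ∀ i, 0 ≤ t i}, f (∑ i, t i • v i)) ∧
    (∀ j : Fin (m + 1), ∀ f : SchwartzMap (EuclideanSpace ℝ (Fin n)) ℂ,
      -∫ t in {t : Fin (m + 1) → ℝ | ∀ i, 0 ≤ t i},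
          fderiv ℝ (⇑f) (∑ i, t i • v i) (v j)
        = ∫ s in {s : Fin m → ℝ | ∀ i, 0 ≤ s i},
            f (∑ i, s i • v (j.succAbove i))) := by
  obtain ⟨u, hu⟩ := hpointed
  have := hasTemperateGrowth_splineMeasure (u := LinearMap.toContinuousLinearMap u) hu
  have hint (f : SchwartzMap (EuclideanSpace ℝ (Fin n)) ℂ) :
      IntegrableOn (fun t => f (∑ i, t i • v i)) (Ici (0 : Fin (m + 1) → ℝ)) :=
    (integrable_splineMeasure_iff f.continuous.aestronglyMeasurable).1 f.integrable
  refine ⟨hint, ⟨SchwartzMap.integralCLM ℂ (splineMeasure v),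
    fun f => integral_splineMeasure f.continuous.aestronglyMeasurable⟩, fun j f => ?_⟩
  have hderiv := hint (LineDeriv.lineDerivOp (v j) f)
  simp only [SchwartzMap.lineDerivOp_apply_eq_fderiv] at hderiv
  have hvj : v j ≠ 0 := fun h => by simpa [h] using hu j
  change -∫ t in Ici 0, _ = ∫ s in Ici 0, _
  rw [integral_Ici_eq_integral_integral_insertNth j hderiv, ← integral_neg]
  refine integral_congr_ae ?_
  filter_upwards [ae_integrableOn_comp_insertNth (j := j) hderiv] with s hs
  simp only [sum_insertNth_smul] at hs ⊢
  rw [SchwartzMap.integral_Ici_fderiv_add_smul f _ hvj hs, neg_neg]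
end

section
/- Let W be a hyperplane in \mathbb{R}^n with equation E (a nonzero linear functional vanishing on W), let q be a polynomial function on a subspace \mathfrak{s} \subseteq W constant in the direction of a vector \phi \in \mathfrak{s}, and let X = [v_1, \ldots, v_N] be vectors spanning a pointed cone with none lying in \mathfrak{s}. Denoting by \bar{v} the projection to V/\langle\phi\rangle, the convolution satisfies (q * T(X))(v) = (q * T(X/\langle\phi\rangle))(\bar{v}) for all v, i.e., \int_0^\infty\cdots\int_0^\infty q(v - \sum t_i v_i)\,dt = \int_0^\infty\cdots\int_0^\infty q(\bar{v} - \sum t_i \bar{v_i})\,dt. -/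
open MeasureTheory

section ShiftAlongDirection

variable {R M α ι : Type*} [CommRing R] [AddCommGroup M] [Module R M]

theorem Finset.sum_smul_add_smul_eq (s : Finset ι) (t c : ι → R) (w : ι → M) (φ : M) :
    ∑ i ∈ s, t i • (w i + c i • φ) = ∑ i ∈ s, t i • w i + (∑ i ∈ s, t i * c i) • φ := by
  simp only [smul_add, Finset.sum_add_distrib, smul_smul, Finset.sum_smul]

theorem apply_sub_sum_smul_shift_eq {q : M → α} {φ : M}
    (hq : ∀ (x : M) (a : R), q (x + a • φ) = q x)
    (s : Finset ι) (t c : ι → R) (w : ι → M) (v : M) :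
    q (v - ∑ i ∈ s, t i • (w i + c i • φ)) = q (v - ∑ i ∈ s, t i • w i) := by
  rw [Finset.sum_smul_add_smul_eq, sub_add_eq_sub_sub, sub_eq_add_neg _ (_ • φ), ← neg_smul, hq]

end ShiftAlongDirection

theorem convolution_polynomial_spline_descends_general
    (n N : ℕ) (q : (Fin n → ℝ) → ℝ)
    (φ : Fin n → ℝ)
    (hqconst : ∀ (x : Fin n → ℝ) (a : ℝ), q (x + a • φ) = q x)
    (w : Fin N → Fin n → ℝ)
    (c : Fin N → ℝ) (v : Fin n → ℝ) :
    ∫ t in {t : Fin N → ℝ | ∀ i, 0 ≤ t i}, q (v - ∑ i, t i • w i)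
      = ∫ t in {t : Fin N → ℝ | ∀ i, 0 ≤ t i}, q (v - ∑ i, t i • (w i + c i • φ)) := by
  congr 1
  funext t
  exact (apply_sub_sum_smul_shift_eq hqconst _ t c w v).symm

/-- Let `q` be a polynomial function on `ℝ^n` constant in the direction of
a vector `φ`, and let `X = [w₁,…,w_N]` span a pointed cone. Then the convolution
`q * T(X)` only depends on the projections of the `wᵢ` modulo `φ`: for any shifts
`cᵢ`, `∫_{[0,∞)^N} q(v - ∑ tᵢ wᵢ) dt = ∫_{[0,∞)^N} q(v - ∑ tᵢ (wᵢ + cᵢ φ)) dt`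
(both integrals being assumed convergent). -/
theorem convolution_polynomial_spline_descends
    (n N : ℕ) (q : (Fin n → ℝ) → ℝ)
    (hqpoly : ∃ p : MvPolynomial (Fin n) ℝ, ∀ x, q x = MvPolynomial.eval x p)
    (φ : Fin n → ℝ)
    (hqconst : ∀ (x : Fin n → ℝ) (a : ℝ), q (x + a • φ) = q x)
    (w : Fin N → Fin n → ℝ)
    (hpointed : ∃ u : Module.Dual ℝ (Fin n → ℝ), ∀ i, 0 < u (w i))
    (c : Fin N → ℝ) (v : Fin n → ℝ)
    (hint₁ : IntegrableOn (fun t : Fin N → ℝ => q (v - ∑ i, t i • w i))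
      {t : Fin N → ℝ | ∀ i, 0 ≤ t i})
    (hint₂ : IntegrableOn (fun t : Fin N → ℝ => q (v - ∑ i, t i • (w i + c i • φ)))
      {t : Fin N → ℝ | ∀ i, 0 ≤ t i}) :
    ∫ t in {t : Fin N → ℝ | ∀ i, 0 ≤ t i}, q (v - ∑ i, t i • w i)
      = ∫ t in {t : Fin N → ℝ | ∀ i, 0 ≤ t i}, q (v - ∑ i, t i • (w i + c i • φ)) :=
  convolution_polynomial_spline_descends_general n N q φ hqconst w c v
end
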